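/- arXiv:1401.6095 — 2 statements merged into one kernel-verified Lean document; each statement's English description precedes it below -/
import Mathlib

section
/- If a Hausdorff locally solid Riesz space (L, τ) has an order bounded τ-neighborhood of zero, then τ is metrizable. -/
open Topology

/-- A subset of a lattice-ordered group is solid if `|x| ≤ |y|` and `y ∈ S` imply `x ∈ S`. -/
def IsSolidSet {L : Type*} [Lattice L] [AddCommGroup L] (S : Set L) : Prop :=
  ∀ x y : L, |x| ≤ |y| → y ∈ S → x ∈ S

open Filter Pointwise Uniformity

/-! If `V ⊆ [u, v]` is a neighborhood of zero and `e = |u| ⊔ |v|`, then `|x| ≤ e` on `V`, so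
`(1 / (n + 1)) • V` lies in the order interval `[-(1 / (n + 1)) • e, (1 / (n + 1)) • e]`. Every
solid neighborhood of zero contains `(1 / (n + 1)) • e` for large `n`, hence contains that whole
interval. So the sets `(1 / (n + 1)) • V` form a countable neighborhood base at zero, and a
Hausdorff topological group with a countable base at zero is metrizable. -/

theorem IsTopologicalAddGroup.metrizableSpace_of_isCountablyGenerated_nhds_zero
    {G : Type*} [AddCommGroup G] [TopologicalSpace G] [IsTopologicalAddGroup G] [T0Space G]
    [(𝓝 (0 : G)).IsCountablyGenerated] : TopologicalSpace.MetrizableSpace G := by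
  let : UniformSpace G := IsTopologicalAddGroup.rightUniformSpace G
  have : IsUniformAddGroup G := isUniformAddGroup_of_addCommGroup
  have : (𝓤 G).IsCountablyGenerated := IsUniformAddGroup.uniformity_countably_generated
  exact UniformSpace.metrizableSpace

theorem abs_le_sup_abs_abs_of_mem_Icc {α : Type*} [Lattice α] [AddCommGroup α] [AddLeftMono α]
    {u v x : α} (hx : x ∈ Set.Icc u v) : |x| ≤ |u| ⊔ |v| :=
  abs_le'.mpr
    ⟨hx.2.trans ((le_abs_self v).trans le_sup_right),
      (neg_le_neg_iff.mpr hx.1).trans ((neg_le_abs u).trans le_sup_left)⟩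

theorem abs_smul_le_smul_of_abs_le {α : Type*} [Lattice α] [AddCommGroup α] [AddLeftMono α]
    [Module ℝ α] [PosSMulMono ℝ α] {c : ℝ} {x e : α} (hc : 0 ≤ c) (hx : |x| ≤ e) :
    |c • x| ≤ c • e :=
  abs_le'.mpr
    ⟨smul_le_smul_of_nonneg_left ((le_abs_self x).trans hx) hc, by
      rw [← smul_neg]; exact smul_le_smul_of_nonneg_left ((neg_le_abs x).trans hx) hc⟩

section LocallySolid

variable {L : Type*} [AddCommGroup L] [Lattice L] [Module ℝ L] [AddLeftMono L]
  [PosSMulMono ℝ L] [TopologicalSpace L] [ContinuousSMul ℝ L]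

theorem exists_one_div_add_one_smul_subset_of_isSolidSet {S V : Set L} (hS : S ∈ 𝓝 0)
    (hSsolid : IsSolidSet S) {u v : L} (hVuv : V ⊆ Set.Icc u v) :
    ∃ n : ℕ, (1 / ((n : ℝ) + 1)) • V ⊆ S := by
  set e := |u| ⊔ |v|
  have htendsto : Tendsto (fun n : ℕ => (1 / ((n : ℝ) + 1)) • e) atTop (𝓝 0) := by
    simpa using (tendsto_one_div_add_atTop_nhds_zero_nat (𝕜 := ℝ)).smul_const e
  obtain ⟨n, hn⟩ := (htendsto.eventually_mem hS).exists
  refine ⟨n, ?_⟩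
  rintro _ ⟨x, hx, rfl⟩
  refine hSsolid _ _ ?_ hn
  calc |(1 / ((n : ℝ) + 1)) • x| ≤ (1 / ((n : ℝ) + 1)) • e :=
        abs_smul_le_smul_of_abs_le (by positivity) (abs_le_sup_abs_abs_of_mem_Icc (hVuv hx))
    _ ≤ |(1 / ((n : ℝ) + 1)) • e| := le_abs_self _

theorem hasBasis_nhds_zero_one_div_add_one_smul
    (hsolid : ∀ U ∈ 𝓝 (0 : L), ∃ S ∈ 𝓝 (0 : L), S ⊆ U ∧ IsSolidSet S)
    {V : Set L} (hV : V ∈ 𝓝 0) {u v : L} (hVuv : V ⊆ Set.Icc u v) :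
    (𝓝 (0 : L)).HasBasis (fun _ : ℕ => True) (fun n => (1 / ((n : ℝ) + 1)) • V) := by
  refine ⟨fun U => ⟨fun hU => ?_, fun ⟨n, _, hnU⟩ => mem_of_superset ?_ hnU⟩⟩
  · obtain ⟨S, hS, hSU, hSsolid⟩ := hsolid U hU
    obtain ⟨n, hn⟩ := exists_one_div_add_one_smul_subset_of_isSolidSet hS hSsolid hVuv
    exact ⟨n, trivial, hn.trans hSU⟩
  · exact (set_smul_mem_nhds_zero_iff (by positivity)).mpr hV

end LocallySolid

/-- A Hausdorff locally solid Riesz space with an order bounded neighborhood of zero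
is metrizable. -/
theorem stmt_11 {L : Type*} [AddCommGroup L] [Lattice L] [Module ℝ L]
    [CovariantClass L L (· + ·) (· ≤ ·)] [PosSMulMono ℝ L]
    [TopologicalSpace L] [IsTopologicalAddGroup L] [ContinuousSMul ℝ L] [T2Space L]
    (hsolid : ∀ U ∈ 𝓝 (0 : L), ∃ S ∈ 𝓝 (0 : L), S ⊆ U ∧ IsSolidSet S)
    (hV : ∃ V ∈ 𝓝 (0 : L), ∃ u v : L, V ⊆ Set.Icc u v) :
    TopologicalSpace.MetrizableSpace L := by
  obtain ⟨V, hV, u, v, hVuv⟩ := hV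
  have : (𝓝 (0 : L)).IsCountablyGenerated :=
    (hasBasis_nhds_zero_one_div_add_one_smul hsolid hV hVuv).isCountablyGenerated
  exact IsTopologicalAddGroup.metrizableSpace_of_isCountablyGenerated_nhds_zero
end

section
/- If a Hausdorff locally solid Riesz space (L, τ) has an order bounded convex τ-neighborhood of zero, then τ is normable. -/
open Topology

/-!
Inside the order bounded neighbourhood `V ⊆ [u, v]` pick a solid neighbourhood `S`; its convex
hull `W` is a convex, balanced neighbourhood of zero that still lies in `[u, v]`, since order
intervals are convex. In a locally solid space order intervals are topologically bounded: a solid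
neighbourhood absorbing `|u| ⊔ |v|` absorbs every `x` with `|x| ≤ |u| ⊔ |v|`, hence all of
`[u, v]`. So `W` is a bounded convex balanced neighbourhood of zero and, as in Kolmogorov's
criterion, its gauge is a norm whose open balls form a base at zero.
-/

section OrderedModule

variable {𝕜 M : Type*} [Field 𝕜] [LinearOrder 𝕜] [IsStrictOrderedRing 𝕜]
  [AddCommGroup M] [Lattice M] [Module 𝕜 M] [PosSMulMono 𝕜 M]

lemma smul_sup_of_pos {c : 𝕜} (hc : 0 < c) (x y : M) : c • (x ⊔ y) = c • x ⊔ c • y :=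
  (OrderIso.smulRight hc).map_sup x y

variable [IsOrderedAddMonoid M]

lemma abs_smul_eq_abs_smul_abs (c : 𝕜) (x : M) : |c • x| = |c| • |x| := by
  rcases eq_or_ne c 0 with rfl | hc
  · simp
  have habs : |c • x| = |(|c| • x)| := by
    rcases abs_choice c with h | h <;> rw [h]
    rw [neg_smul, abs_neg]
  rw [habs]
  change _ ⊔ _ = |c| • (x ⊔ -x)
  rw [smul_sup_of_pos (abs_pos.2 hc), smul_neg]

end OrderedModule

section LocallySolid

variable {L : Type*} [AddCommGroup L] [Lattice L] [IsOrderedAddMonoid L]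

lemma abs_le_abs_sup_abs_of_mem_Icc {u v x : L} (hx : x ∈ Set.Icc u v) : |x| ≤ |(|u| ⊔ |v|)| := by
  rw [abs_of_nonneg ((abs_nonneg u).trans le_sup_left)]
  exact sup_le (hx.2.trans ((le_abs_self v).trans le_sup_right))
    ((neg_le_neg hx.1).trans ((neg_le_abs u).trans le_sup_left))

variable [Module ℝ L] [PosSMulMono ℝ L]

lemma IsSolidSet.balanced {S : Set L} (hS : IsSolidSet S) : Balanced ℝ S := by
  rintro a ha _ ⟨x, hx, rfl⟩
  refine hS _ x ?_ hx
  have h1 : 0 ≤ 1 - |a| := by rw [← Real.norm_eq_abs]; linarith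
  have := smul_nonneg h1 (abs_nonneg x)
  rwa [sub_smul, one_smul, sub_nonneg, ← abs_smul_eq_abs_smul_abs] at this

lemma IsSolidSet.absorbs_abs_le {S : Set L} (hS : IsSolidSet S) {w : L}
    (hw : Absorbs ℝ S {w}) : Absorbs ℝ S {x | |x| ≤ |w|} := by
  rw [absorbs_iff_eventually_cobounded_mapsTo] at hw ⊢
  filter_upwards [hw] with c hc x hx
  refine hS _ _ ?_ (hc rfl)
  simp only [abs_smul_eq_abs_smul_abs]
  exact smul_le_smul_of_nonneg_left hx (abs_nonneg _)

variable [TopologicalSpace L]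

variable (L) in
def IsLocallySolid : Prop := ∀ U ∈ 𝓝 (0 : L), ∃ S ∈ 𝓝 (0 : L), S ⊆ U ∧ IsSolidSet S

variable [ContinuousSMul ℝ L]

lemma IsLocallySolid.isVonNBounded_Icc (hL : IsLocallySolid L) (u v : L) :
    Bornology.IsVonNBounded ℝ (Set.Icc u v) := by
  intro U hU
  obtain ⟨S, hS, hSU, hSsolid⟩ := hL U hU
  exact ((hSsolid.absorbs_abs_le (absorbent_nhds_zero hS _)).mono_right
    fun _ => abs_le_abs_sup_abs_of_mem_Icc).mono_left hSU

end LocallySolid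

section Kolmogorov

variable {E : Type*} [AddCommGroup E] [Module ℝ E] [TopologicalSpace E] [ContinuousSMul ℝ E]

lemma nhds_basis_zero_gauge_lt {s : Set E} (hb : Bornology.IsVonNBounded ℝ s) (h₀ : s ∈ 𝓝 0) :
    (𝓝 (0 : E)).HasBasis (fun ε : ℝ => 0 < ε) (fun ε => {x | gauge s x < ε}) := by
  rw [← comap_gauge_nhds_zero hb h₀]
  refine ((nhds_basis_zero_abs_lt ℝ).comap (gauge s)).congr (fun _ => Iff.rfl) fun _ _ => ?_
  ext x
  simp only [Set.mem_preimage, Set.mem_ofPred_eq, abs_of_nonneg (gauge_nonneg x)]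

lemma exists_norm_of_isVonNBounded_convex_balanced_nhds [T1Space E] {W : Set E}
    (hW₀ : W ∈ 𝓝 0) (hWc : Convex ℝ W) (hWb : Balanced ℝ W)
    (hWbdd : Bornology.IsVonNBounded ℝ W) :
    ∃ f : E → ℝ, (∀ x, 0 ≤ f x) ∧ (∀ x, f x = 0 ↔ x = 0) ∧
      (∀ (c : ℝ) (x : E), f (c • x) = |c| * f x) ∧
      (∀ x y : E, f (x + y) ≤ f x + f y) ∧
      (𝓝 (0 : E)).HasBasis (fun ε : ℝ => 0 < ε) (fun ε => {x : E | f x < ε}) :=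
  have hWa := absorbent_nhds_zero hW₀
  ⟨gauge W, gauge_nonneg, fun _ => gauge_eq_zero hWa hWbdd, gauge_smul hWb,
    gauge_add_le hWc hWa, nhds_basis_zero_gauge_lt hWbdd hW₀⟩

end Kolmogorov

theorem stmt_12_general {L : Type*} [AddCommGroup L] [Lattice L] [Module ℝ L]
    [CovariantClass L L (· + ·) (· ≤ ·)] [PosSMulMono ℝ L]
    [TopologicalSpace L] [ContinuousSMul ℝ L] [T2Space L]
    (hsolid : ∀ U ∈ 𝓝 (0 : L), ∃ S ∈ 𝓝 (0 : L), S ⊆ U ∧ IsSolidSet S)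
    (hV : ∃ V ∈ 𝓝 (0 : L), Convex ℝ V ∧ ∃ u v : L, V ⊆ Set.Icc u v) :
    ∃ f : L → ℝ, (∀ x, 0 ≤ f x) ∧ (∀ x, f x = 0 ↔ x = 0) ∧
      (∀ (c : ℝ) (x : L), f (c • x) = |c| * f x) ∧
      (∀ x y : L, f (x + y) ≤ f x + f y) ∧
      (𝓝 (0 : L)).HasBasis (fun ε : ℝ => 0 < ε) (fun ε => {x : L | f x < ε}) := by
  have : IsOrderedAddMonoid L :=
    { add_le_add_left := fun _ _ h c => by simpa only [add_comm _ c] using add_le_add_right h c }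
  obtain ⟨V, hV₀, -, u, v, hVuv⟩ := hV
  obtain ⟨S, hS₀, hSV, hSsolid⟩ := hsolid V hV₀
  have hWuv : convexHull ℝ S ⊆ Set.Icc u v := convexHull_min (hSV.trans hVuv) (convex_Icc u v)
  exact exists_norm_of_isVonNBounded_convex_balanced_nhds
    (Filter.mem_of_superset hS₀ (subset_convexHull ℝ S)) (convex_convexHull ℝ S)
    hSsolid.balanced.convexHull ((IsLocallySolid.isVonNBounded_Icc hsolid u v).subset hWuv)

/-- A Hausdorff locally solid Riesz space with an order bounded convex neighborhood
of zero is normable: there is a norm whose balls form a neighborhood base at zero. -/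
theorem stmt_12 {L : Type*} [AddCommGroup L] [Lattice L] [Module ℝ L]
    [CovariantClass L L (· + ·) (· ≤ ·)] [PosSMulMono ℝ L]
    [TopologicalSpace L] [IsTopologicalAddGroup L] [ContinuousSMul ℝ L] [T2Space L]
    (hsolid : ∀ U ∈ 𝓝 (0 : L), ∃ S ∈ 𝓝 (0 : L), S ⊆ U ∧ IsSolidSet S)
    (hV : ∃ V ∈ 𝓝 (0 : L), Convex ℝ V ∧ ∃ u v : L, V ⊆ Set.Icc u v) :
    ∃ f : L → ℝ, (∀ x, 0 ≤ f x) ∧ (∀ x, f x = 0 ↔ x = 0) ∧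
      (∀ (c : ℝ) (x : L), f (c • x) = |c| * f x) ∧
      (∀ x y : L, f (x + y) ≤ f x + f y) ∧
      (𝓝 (0 : L)).HasBasis (fun ε : ℝ => 0 < ε) (fun ε => {x : L | f x < ε}) :=
  stmt_12_general hsolid hV
end
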